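/- arXiv:1502.00665 — 3 statements merged into one kernel-verified Lean document; each statement's English description precedes it below -/
import Mathlib

section
/- There exists an absolute constant C > 0 such that for all integers s, d with 1 ≤ s ≤ d and all σ > 0, the estimator L̂ defined by L̂(y) = Σ_{j=1}^d y_j·1{|y_j| > σ√(2 log(1+d/s²))} if s < √d, and L̂(y) = Σ_{j=1}^d y_j if s ≥ √d, satisfies sup_{θ ∈ B_0(s)} E_θ (L̂(y) − L(θ))² ≤ C σ² s² log(1 + d/s²). -/
open MeasureTheory ProbabilityTheory Real
open scoped ENNReal NNReal BigOperators

noncomputable section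

/-- The Gaussian product measure `N(θ, σ² I_d)` on `ℝ^d = Fin d → ℝ`: the law of the
observation `y = θ + σ ξ` with `ξ` having i.i.d. standard normal coordinates. -/
def gaussPi (d : ℕ) (σ : ℝ) (θ : Fin d → ℝ) : Measure (Fin d → ℝ) :=
  Measure.pi fun j => gaussianReal (θ j) (Real.toNNReal (σ ^ 2))

/-- Expected squared error `E_θ (T(y) - t)²` (under `P_θ = N(θ, σ² I_d)`) of the
estimator `T` for the target value `t`, as a Lebesgue integral with values in `[0,∞]`. -/
def sqRisk (d : ℕ) (σ : ℝ) (θ : Fin d → ℝ) (T : (Fin d → ℝ) → ℝ) (t : ℝ) : ℝ≥0∞ :=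
  ∫⁻ y, ENNReal.ofReal ((T y - t) ^ 2) ∂(gaussPi d σ θ)


/-- The class `B_0(s)` of `s`-sparse vectors of `ℝ^d`. -/
def B0 (d s : ℕ) : Set (Fin d → ℝ) := {θ | Nat.card {j // θ j ≠ 0} ≤ s}

/-- The estimator `L̂` of the linear functional: hard thresholding at level
`σ √(2 log(1+d/s²))` if `s < √d`, and the full sum of the observations if `s ≥ √d`. -/
def hatL (d s : ℕ) (σ : ℝ) (y : Fin d → ℝ) : ℝ :=
  if (s : ℝ) < Real.sqrt d then
    ∑ j, if σ * Real.sqrt (2 * Real.log (1 + (d : ℝ) / (s : ℝ) ^ 2)) < |y j| then y j else 0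
  else ∑ j, y j

end


/-
The estimation error is a sum of independent coordinate errors, so its second moment is the sum
of the coordinate second moments plus the square of the total bias. For `s ≥ √d` the plain sum
has no bias and variance `d σ² ≤ s² σ²`, which is of order `σ² s² log (1 + d/s²)` because
`d/s² ≤ 1`. For `s < √d`, hard thresholding at `τ = σ √(2 log (1 + d/s²))` changes each
observation by at most `τ`, so the at most `s` nonzero coordinates contribute bias `≤ s τ` and
second moments `≤ 2 τ² + 2 σ²`; on each of the `d` zero coordinates the estimator is unbiased by
symmetry and its second moment is a Gaussian tail term, which a Chernoff bound controls by
`2 (σ² + τ²) e^{-τ²/(2σ²)} = 2 (σ² + τ²) / (1 + d/s²)`, so that `d` of them cost `O(σ² s² log)`.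
-/

theorem integral_sq_sum_le_of_iIndepFun {Ω ι : Type*} [MeasurableSpace Ω] {μ : Measure Ω}
    [IsProbabilityMeasure μ] [Fintype ι] {X : ι → Ω → ℝ} (hX : ∀ i, MemLp (X i) 2 μ)
    (hind : iIndepFun X μ) :
    ∫ ω, (∑ i, X i ω) ^ 2 ∂μ ≤ ∑ i, ∫ ω, X i ω ^ 2 ∂μ + (∑ i, ∫ ω, X i ω ∂μ) ^ 2 := by
  have hsum : MemLp (∑ i, X i) 2 μ := memLp_finsetSum' _ fun i _ => hX i
  have hvar := IndepFun.variance_sum (s := Finset.univ) (fun i _ => hX i)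
    fun i _ j _ hij => hind.indepFun hij
  rw [variance_eq_sub hsum] at hvar
  have hmean : ∫ ω, ∑ i, X i ω ∂μ = ∑ i, ∫ ω, X i ω ∂μ :=
    integral_finsetSum _ fun i _ => (hX i).integrable one_le_two
  have hle : ∑ i, Var[X i; μ] ≤ ∑ i, ∫ ω, X i ω ^ 2 ∂μ :=
    Finset.sum_le_sum fun i _ => variance_le_expectation_sq (hX i).1
  simp only [Finset.sum_apply, Pi.pow_apply] at hvar
  rw [hmean] at hvar
  linarith

theorem lintegral_sq_sum_pi_le {ι : Type*} [Fintype ι] {Ω : ι → Type*}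
    [∀ i, MeasurableSpace (Ω i)]
    {μ : ∀ i, Measure (Ω i)} [∀ i, IsProbabilityMeasure (μ i)] {f : ∀ i, Ω i → ℝ}
    (hf : ∀ i, MemLp (f i) 2 (μ i)) :
    ∫⁻ y, ENNReal.ofReal ((∑ i, f i (y i)) ^ 2) ∂Measure.pi μ
      ≤ ENNReal.ofReal (∑ i, ∫ x, f i x ^ 2 ∂μ i + (∑ i, ∫ x, f i x ∂μ i) ^ 2) := by
  have hX : ∀ i, MemLp (fun y : ∀ i, Ω i => f i (y i)) 2 (Measure.pi μ) := fun i =>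
    (hf i).comp_measurePreserving (measurePreserving_eval μ i)
  have hint : ∀ i {g : Ω i → ℝ}, AEStronglyMeasurable g (μ i) →
      ∫ y, g (y i) ∂Measure.pi μ = ∫ x, g x ∂μ i := fun i g hg => by
    rw [← (measurePreserving_eval μ i).map_eq] at hg ⊢
    exact (integral_map (measurable_pi_apply i).aemeasurable hg).symm
  have hsq : Integrable (fun y : ∀ i, Ω i => (∑ i, f i (y i)) ^ 2) (Measure.pi μ) := by
    simpa using (memLp_finsetSum' Finset.univ fun i _ => hX i).integrable_sq
  rw [← ofReal_integral_eq_lintegral_ofReal hsq (ae_of_all _ fun _ => sq_nonneg _)]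
  refine ENNReal.ofReal_le_ofReal ?_
  have := integral_sq_sum_le_of_iIndepFun hX (iIndepFun_pi fun i => (hf i).1.aemeasurable)
  have hsq_i : ∀ i, ∫ y, f i (y i) ^ 2 ∂Measure.pi μ = ∫ x, f i x ^ 2 ∂μ i := fun i =>
    hint i ((hf i).1.pow 2)
  simpa only [hint _ (hf _).1, hsq_i] using this

noncomputable def hardThreshold (τ x : ℝ) : ℝ := if τ < |x| then x else 0

namespace hardThreshold

theorem measurable (τ : ℝ) : Measurable (hardThreshold τ) :=
  Measurable.ite (measurableSet_lt measurable_const measurable_abs) measurable_id measurable_const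

theorem abs_le (τ x : ℝ) : |hardThreshold τ x| ≤ |x| := by
  unfold hardThreshold; split_ifs <;> simp

theorem abs_sub_le {τ : ℝ} (hτ : 0 ≤ τ) (x : ℝ) : |hardThreshold τ x - x| ≤ τ := by
  unfold hardThreshold; split_ifs with h
  · simpa using hτ
  · simpa using not_lt.mp h

theorem neg (τ x : ℝ) : hardThreshold τ (-x) = -hardThreshold τ x := by
  unfold hardThreshold; rw [abs_neg]; split_ifs <;> simp

theorem memLp {μ : Measure ℝ} (τ : ℝ) {p : ℝ≥0∞} (h : MemLp id p μ) :
    MemLp (hardThreshold τ) p μ :=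
  h.mono (measurable τ).aestronglyMeasurable (ae_of_all _ fun x => abs_le τ x)

end hardThreshold

section Gaussian
variable {m : ℝ} {v : ℝ≥0}

theorem integral_sub_gaussianReal : ∫ x, (x - m) ∂gaussianReal m v = 0 := by
  have hid : Integrable (fun x : ℝ => x) (gaussianReal m v) :=
    (memLp_id_gaussianReal 1).integrable le_rfl
  simp [integral_sub hid (integrable_const m)]

theorem integral_sq_sub_gaussianReal : ∫ x, (x - m) ^ 2 ∂gaussianReal m v = v := by
  simpa using (variance_eq_integral (μ := gaussianReal m v) measurable_id.aemeasurable).symm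

theorem integral_sq_mul_exp_gaussianReal (t : ℝ) :
    ∫ x, x ^ 2 * exp (t * x) ∂gaussianReal 0 v = (v + (v * t) ^ 2) * exp (v * t ^ 2 / 2) := by
  have h := iteratedDeriv_mgf (X := id) (μ := gaussianReal 0 v) (t := t) (by simp) 2
  simp only [id] at h
  rw [← h, mgf_id_gaussianReal, iteratedDeriv_succ, iteratedDeriv_one]
  simp only [zero_mul, zero_add]
  have h₁ : ∀ t : ℝ, HasDerivAt (fun t => exp (v * t ^ 2 / 2)) (v * t * exp (v * t ^ 2 / 2)) t :=
    fun t => (((hasDerivAt_pow 2 t).const_mul (v : ℝ)).div_const 2).exp.congr_deriv (by ring)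
  have h₂ : HasDerivAt (fun t => v * t * exp (v * t ^ 2 / 2))
      ((v + (v * t) ^ 2) * exp (v * t ^ 2 / 2)) t :=
    (((hasDerivAt_id' t).const_mul (v : ℝ)).fun_mul (h₁ t)).congr_deriv (by ring)
  rw [funext fun t => (h₁ t).deriv, h₂.deriv]

theorem integral_hardThreshold_gaussianReal_zero (τ : ℝ) :
    ∫ x, hardThreshold τ x ∂gaussianReal 0 v = 0 := by
  have h := integral_map (μ := gaussianReal 0 v) (measurable_neg.aemeasurable)
    (hardThreshold.measurable τ).aestronglyMeasurable
  rw [gaussianReal_map_neg, neg_zero] at h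
  simp only [hardThreshold.neg, integral_neg] at h
  linarith

theorem abs_integral_hardThreshold_sub_le {τ : ℝ} (hτ : 0 ≤ τ) :
    |∫ x, (hardThreshold τ x - m) ∂gaussianReal m v| ≤ τ := by
  have hid : Integrable (fun x : ℝ => x) (gaussianReal m v) :=
    (memLp_id_gaussianReal 1).integrable le_rfl
  have hη : Integrable (hardThreshold τ) (gaussianReal m v) :=
    (hardThreshold.memLp τ (memLp_id_gaussianReal 1)).integrable le_rfl
  have hbias : ∫ x, (hardThreshold τ x - m) ∂gaussianReal m v
      = ∫ x, (hardThreshold τ x - x) ∂gaussianReal m v := by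
    rw [integral_sub hη (integrable_const m), integral_sub hη hid, integral_id_gaussianReal]
    simp
  rw [hbias]
  simpa using norm_integral_le_of_norm_le_const (μ := gaussianReal m v)
    (f := fun x => hardThreshold τ x - x) (ae_of_all _ fun x => hardThreshold.abs_sub_le hτ x)

theorem integral_sq_hardThreshold_sub_le {τ : ℝ} (hτ : 0 ≤ τ) :
    ∫ x, (hardThreshold τ x - m) ^ 2 ∂gaussianReal m v ≤ 2 * τ ^ 2 + 2 * v := by
  have hsq : Integrable (fun x => (x - m) ^ 2) (gaussianReal m v) :=
    ((memLp_id_gaussianReal 2).sub (memLp_const m)).integrable_sq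
  have hpt : ∀ x, (hardThreshold τ x - m) ^ 2 ≤ 2 * τ ^ 2 + 2 * (x - m) ^ 2 := fun x => by
    have h := abs_le.mp (hardThreshold.abs_sub_le hτ x)
    nlinarith [sq_nonneg (hardThreshold τ x - x - (x - m))]
  calc ∫ x, (hardThreshold τ x - m) ^ 2 ∂gaussianReal m v
      ≤ ∫ x, (2 * τ ^ 2 + 2 * (x - m) ^ 2) ∂gaussianReal m v :=
        integral_mono (((hardThreshold.memLp τ (memLp_id_gaussianReal 2)).sub
          (memLp_const m)).integrable_sq) ((integrable_const _).add (hsq.const_mul 2)) hpt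
    _ = 2 * τ ^ 2 + 2 * v := by
        rw [integral_add (integrable_const _) (hsq.const_mul 2),
          integral_const_mul 2 (fun x => (x - m) ^ 2), integral_sq_sub_gaussianReal]
        simp

theorem integral_sq_hardThreshold_gaussianReal_le (hv : v ≠ 0) {τ : ℝ} (hτ : 0 ≤ τ) :
    ∫ x, hardThreshold τ x ^ 2 ∂gaussianReal 0 v ≤ 2 * (v + τ ^ 2) * exp (-(τ ^ 2 / (2 * v))) := by
  have hv0 : (0 : ℝ) < v := by positivity
  set t := τ / v with ht
  have htv : v * t = τ := by rw [ht]; field_simp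
  have ht0 : 0 ≤ t := by positivity
  have hint : ∀ s : ℝ, Integrable (fun x => x ^ 2 * exp (s * x)) (gaussianReal 0 v) := fun s =>
    integrable_pow_mul_exp_of_mem_interior_integrableExpSet (X := id) (by simp) 2
  -- Chernoff: `1{|x| > τ} ≤ exp (t (x - τ)) + exp (t (-x - τ))` for `t ≥ 0`
  have hpt : ∀ x, hardThreshold τ x ^ 2
      ≤ exp (-(t * τ)) * (x ^ 2 * exp (t * x)) + exp (-(t * τ)) * (x ^ 2 * exp (-t * x)) := by
    intro x
    unfold hardThreshold
    split_ifs with h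
    · have hone : 1 ≤ exp (-(t * τ)) * exp (t * x) + exp (-(t * τ)) * exp (-t * x) := by
        rw [← exp_add, ← exp_add]
        rcases le_abs'.mp h.le with hx | hx
        · nlinarith [add_one_le_exp (-(t * τ) + -t * x), exp_pos (-(t * τ) + t * x)]
        · nlinarith [add_one_le_exp (-(t * τ) + t * x), exp_pos (-(t * τ) + -t * x)]
      nlinarith [sq_nonneg x]
    · exact (zero_pow two_ne_zero).trans_le (by positivity)
  calc ∫ x, hardThreshold τ x ^ 2 ∂gaussianReal 0 v
      ≤ ∫ x, (exp (-(t * τ)) * (x ^ 2 * exp (t * x))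
          + exp (-(t * τ)) * (x ^ 2 * exp (-t * x))) ∂gaussianReal 0 v :=
        integral_mono ((hardThreshold.memLp τ (memLp_id_gaussianReal 2)).integrable_sq)
          (((hint t).const_mul _).add ((hint (-t)).const_mul _)) hpt
    _ = 2 * (v + τ ^ 2) * exp (-(τ ^ 2 / (2 * v))) := by
        rw [integral_add ((hint t).const_mul _) ((hint (-t)).const_mul _), integral_const_mul,
          integral_const_mul, integral_sq_mul_exp_gaussianReal, integral_sq_mul_exp_gaussianReal]
        have he : -(t * τ) + v * t ^ 2 / 2 = -(τ ^ 2 / (2 * v)) := by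
          rw [ht]; field_simp; ring
        rw [← he, exp_add, mul_neg, neg_sq, neg_sq, htv]
        ring

end Gaussian

theorem sum_le_of_card_support_le {ι : Type*} [Fintype ι] {θ g : ι → ℝ} {s : ℕ} {A B : ℝ}
    (hθ : Nat.card {j // θ j ≠ 0} ≤ s) (hA : 0 ≤ A) (hB : 0 ≤ B)
    (h₁ : ∀ j, θ j ≠ 0 → g j ≤ A) (h₀ : ∀ j, θ j = 0 → g j ≤ B) :
    ∑ j, g j ≤ s * A + Fintype.card ι * B := by
  classical
  have hpt : ∀ j, g j ≤ (if θ j ≠ 0 then A else 0) + B := fun j => by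
    by_cases h : θ j = 0
    · simpa [h] using h₀ j h
    · simpa [h] using (h₁ j h).trans (le_add_of_nonneg_right hB)
  have hcard : ((Finset.univ.filter fun j => θ j ≠ 0).card : ℝ) ≤ s := by
    rw [← Fintype.card_subtype, ← Nat.card_eq_fintype_card]
    exact_mod_cast hθ
  calc ∑ j, g j ≤ ∑ j, ((if θ j ≠ 0 then A else 0) + B) := Finset.sum_le_sum fun j _ => hpt j
    _ = (Finset.univ.filter fun j => θ j ≠ 0).card * A + Fintype.card ι * B := by
      rw [Finset.sum_add_distrib, Finset.sum_ite, Finset.sum_const_zero, add_zero,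
        Finset.sum_const, Finset.sum_const, nsmul_eq_mul, nsmul_eq_mul, Finset.card_univ]
    _ ≤ s * A + Fintype.card ι * B := by gcongr

theorem sqRisk_sum_le {d : ℕ} {σ : ℝ} {θ : Fin d → ℝ} {g : ℝ → ℝ}
    (hg : ∀ m, MemLp g 2 (gaussianReal m (σ ^ 2).toNNReal)) :
    sqRisk d σ θ (fun y => ∑ j, g (y j)) (∑ j, θ j)
      ≤ ENNReal.ofReal (∑ j, ∫ x, (g x - θ j) ^ 2 ∂gaussianReal (θ j) (σ ^ 2).toNNReal
          + (∑ j, ∫ x, (g x - θ j) ∂gaussianReal (θ j) (σ ^ 2).toNNReal) ^ 2) := by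
  simp_rw [sqRisk, gaussPi, ← Finset.sum_sub_distrib]
  exact lintegral_sq_sum_pi_le fun j => (hg (θ j)).sub (memLp_const (θ j))

theorem le_two_mul_mul_log_one_add_div {a b : ℝ} (ha : 0 ≤ a) (hab : a ≤ b) :
    a ≤ 2 * b * log (1 + a / b) := by
  obtain rfl | hb := (ha.trans hab).eq_or_lt
  · simpa using hab
  have hx : a / b ≤ 1 := (div_le_one hb).2 hab
  have hlog : 2 * (a / b) / 3 ≤ log (1 + a / b) :=
    (div_le_div_of_nonneg_left (by positivity) (by positivity) (by linarith)).trans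
      (le_log_one_add_of_nonneg (by positivity))
  calc a = b * (a / b) := by field_simp
    _ ≤ 2 * b * log (1 + a / b) := by
      nlinarith [mul_le_mul_of_nonneg_left hlog hb.le, div_nonneg ha hb.le]

theorem sqRisk_hatL_le_of_sqrt_le {d s : ℕ} {σ : ℝ} {θ : Fin d → ℝ} (hsd : √(d : ℝ) ≤ s) :
    sqRisk d σ θ (hatL d s σ) (∑ j, θ j)
      ≤ ENNReal.ofReal (16 * (σ ^ 2 * (s : ℝ) ^ 2 * log (1 + (d : ℝ) / (s : ℝ) ^ 2))) := by
  have hhat : hatL d s σ = fun y => ∑ j, y j := funext fun y => if_neg hsd.not_gt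
  rw [hhat]
  refine (sqRisk_sum_le (g := fun x => x) fun m => memLp_id_gaussianReal 2).trans
    (ENNReal.ofReal_le_ofReal ?_)
  have hd : (d : ℝ) ≤ s ^ 2 := by
    nlinarith [Real.sq_sqrt d.cast_nonneg, Real.sqrt_nonneg (d : ℝ)]
  have hlog := le_two_mul_mul_log_one_add_div d.cast_nonneg hd
  simp only [integral_sq_sub_gaussianReal, integral_sub_gaussianReal, Finset.sum_const_zero,
    Real.coe_toNNReal _ (sq_nonneg σ), Finset.sum_const, Finset.card_univ, Fintype.card_fin,
    nsmul_eq_mul]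
  nlinarith [sq_nonneg σ]

theorem sqRisk_sum_hardThreshold_le {d s : ℕ} {σ τ : ℝ} {θ : Fin d → ℝ} (hσ : σ ≠ 0)
    (hτ : 0 ≤ τ) (hθ : θ ∈ B0 d s) :
    sqRisk d σ θ (fun y => ∑ j, hardThreshold τ (y j)) (∑ j, θ j)
      ≤ ENNReal.ofReal (s * (2 * τ ^ 2 + 2 * σ ^ 2)
          + d * (2 * (σ ^ 2 + τ ^ 2) * exp (-(τ ^ 2 / (2 * σ ^ 2)))) + (s * τ) ^ 2) := by
  set v := (σ ^ 2).toNNReal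
  have hv : (v : ℝ) = σ ^ 2 := Real.coe_toNNReal _ (sq_nonneg σ)
  have hv0 : v ≠ 0 := by rw [ne_eq, Real.toNNReal_eq_zero, not_le]; positivity
  refine (sqRisk_sum_le fun m => hardThreshold.memLp τ (memLp_id_gaussianReal 2)).trans
    (ENNReal.ofReal_le_ofReal ?_)
  have hsq := sum_le_of_card_support_le hθ (by positivity) (by positivity)
    (g := fun j => ∫ y, (hardThreshold τ y - θ j) ^ 2 ∂gaussianReal (θ j) v)
    (A := 2 * τ ^ 2 + 2 * v) (B := 2 * (v + τ ^ 2) * exp (-(τ ^ 2 / (2 * v))))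
    (fun j _ => integral_sq_hardThreshold_sub_le hτ)
    (fun j h => by simpa [h] using integral_sq_hardThreshold_gaussianReal_le hv0 hτ)
  have hbias := sum_le_of_card_support_le hθ hτ le_rfl
    (g := fun j => |∫ y, (hardThreshold τ y - θ j) ∂gaussianReal (θ j) v|)
    (fun j _ => abs_integral_hardThreshold_sub_le hτ)
    (fun j h => by simp [h, integral_hardThreshold_gaussianReal_zero])
  rw [Fintype.card_fin, mul_zero, add_zero] at hbias
  have habs := (Finset.abs_sum_le_sum_abs _ _).trans hbias
  have hbias2 := sq_le_sq' (neg_le_of_abs_le habs) (le_of_abs_le habs)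
  rw [Fintype.card_fin, hv] at hsq
  linarith

theorem sqRisk_hatL_le_of_lt_sqrt {d s : ℕ} {σ : ℝ} {θ : Fin d → ℝ} (hs : 0 < s) (hσ : 0 < σ)
    (hθ : θ ∈ B0 d s) (hsd : (s : ℝ) < √d) :
    sqRisk d σ θ (hatL d s σ) (∑ j, θ j)
      ≤ ENNReal.ofReal (16 * (σ ^ 2 * (s : ℝ) ^ 2 * log (1 + (d : ℝ) / (s : ℝ) ^ 2))) := by
  set x := (d : ℝ) / (s : ℝ) ^ 2
  set L := log (1 + x)
  set τ := σ * √(2 * L)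
  have hs1 : (1 : ℝ) ≤ s := by exact_mod_cast hs
  have hx : 1 < x := by
    rw [lt_div_iff₀ (by positivity), one_mul]
    calc (s : ℝ) ^ 2 < √(d : ℝ) ^ 2 := by gcongr
      _ = (d : ℝ) := Real.sq_sqrt d.cast_nonneg
  have hL : 2 / 3 < L := calc
    2 / 3 < 2 * x / (x + 2) := by rw [lt_div_iff₀ (by linarith)]; linarith
    _ ≤ L := le_log_one_add_of_nonneg (by linarith)
  have hτ2 : τ ^ 2 = 2 * σ ^ 2 * L := by
    rw [mul_pow, Real.sq_sqrt (by linarith)]; ring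
  -- the threshold is chosen so that the Gaussian tail factor is exactly `(1 + x)⁻¹`
  have htail : exp (-(τ ^ 2 / (2 * σ ^ 2))) = (1 + x)⁻¹ := by
    rw [hτ2, show -(2 * σ ^ 2 * L / (2 * σ ^ 2)) = -L by field_simp, exp_neg,
      exp_log (by linarith)]
  have hd : (d : ℝ) * (1 + x)⁻¹ ≤ s ^ 2 := by
    rw [← div_eq_mul_inv, div_le_iff₀ (by linarith), show (d : ℝ) = s ^ 2 * x by
      simp only [x]; field_simp]
    nlinarith
  have hhat : hatL d s σ = fun y => ∑ j, hardThreshold τ (y j) := funext fun y => if_pos hsd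
  rw [hhat]
  refine (sqRisk_sum_hardThreshold_le hσ.ne' (by positivity) hθ).trans
    (ENNReal.ofReal_le_ofReal ?_)
  rw [htail]
  calc _ = s * (2 * τ ^ 2 + 2 * σ ^ 2) + 2 * (σ ^ 2 + τ ^ 2) * ((d : ℝ) * (1 + x)⁻¹)
          + s ^ 2 * τ ^ 2 := by ring
    _ ≤ s ^ 2 * (2 * τ ^ 2 + 2 * σ ^ 2) + 2 * (σ ^ 2 + τ ^ 2) * s ^ 2 + s ^ 2 * τ ^ 2 := by
        gcongr; nlinarith
    _ = σ ^ 2 * s ^ 2 * (10 * L + 4) := by linear_combination 5 * (s : ℝ) ^ 2 * hτ2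
    _ ≤ 16 * (σ ^ 2 * s ^ 2 * L) := by
        nlinarith [mul_pos (pow_pos hσ 2) (pow_pos (zero_lt_one.trans_le hs1) 2)]

/-- Theorem 2.1, upper bound: there is an absolute constant `C > 0` such that for all
`1 ≤ s ≤ d` and all `σ > 0`,
`sup_{θ ∈ B_0(s)} E_θ (L̂(y) − L(θ))² ≤ C σ² s² log(1 + d/s²)`. -/
theorem linear_functional_upper_B0 :
    ∃ C : ℝ, 0 < C ∧ ∀ (s d : ℕ), 1 ≤ s → s ≤ d → ∀ σ : ℝ, 0 < σ →
      (⨆ θ ∈ B0 d s, sqRisk d σ θ (hatL d s σ) (∑ j, θ j))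
        ≤ ENNReal.ofReal
            (C * (σ ^ 2 * (s : ℝ) ^ 2 * Real.log (1 + (d : ℝ) / (s : ℝ) ^ 2))) := by
  refine ⟨16, by norm_num, fun s d hs _ σ hσ => iSup₂_le fun θ hθ => ?_⟩
  rcases lt_or_ge (s : ℝ) √(d : ℝ) with hsd | hsd
  · exact sqRisk_hatL_le_of_lt_sqrt hs hσ hθ hsd
  · exact sqRisk_hatL_le_of_sqrt_le hsd
end

section
/- Let b > 0 and d ≥ 1 an integer. If κ > bσ with κ, σ > 0, then inf_{T̂} sup_{θ ∈ B_2(κ) ∩ B_0(1)} P_θ(|T̂(y) − Q(θ)| ≥ (3b/8)σκ) ≥ (1/4)·exp(−b²/4), where the infimum is over all Borel measurable estimators T̂ : ℝ^d → ℝ. -/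
open MeasureTheory ProbabilityTheory Real
open scoped ENNReal NNReal BigOperators

noncomputable section

/-- The Euclidean ball `B_2(κ) = {θ : ∑_j θ_j² ≤ κ²}`. -/
def B2 (d : ℕ) (κ : ℝ) : Set (Fin d → ℝ) := {θ | ∑ j, (θ j) ^ 2 ≤ κ ^ 2}

end

/-!
Two-point argument with `θ₀ = κ e₀` and `θ₁ = (κ - bσ/2) e₀`. Their quadratic functionals
differ by more than twice the threshold `(3b/8)σκ` (this is where `bσ < κ` enters), so the
events "`T` misses `Q(θ₀)`" and "`T` misses `Q(θ₁)`" cover the whole space. On the half-space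
`{y₀ ≤ κ}`, of `P_θ₀`-probability `1/2`, the likelihood ratio `dP_θ₁/dP_θ₀` is at least
`exp(-b²/8)`. Hence either `P_θ₀`(miss) `≥ 1/4`, or the `P_θ₀`-mass `≥ 1/4` that the second event
carries inside the half-space is transported to `P_θ₁` with a loss of at most `exp(-b²/8)`.
-/

open Set Function

instance isProbabilityMeasure_gaussPi (d : ℕ) (σ : ℝ) (θ : Fin d → ℝ) :
    IsProbabilityMeasure (gaussPi d σ θ) := by
  unfold gaussPi; infer_instance

theorem MeasureTheory.Measure.smul_restrict_pi_le_pi {n : ℕ} {α : Fin (n + 1) → Type*}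
    [∀ j, MeasurableSpace (α j)] {μ ν : ∀ j, Measure (α j)} [∀ j, SigmaFinite (μ j)]
    [∀ j, SigmaFinite (ν j)] {i : Fin (n + 1)} (hne : ∀ j ≠ i, μ j = ν j) {S : Set (α i)}
    {c : ℝ≥0∞} (h : c • (μ i).restrict S ≤ ν i) :
    c • (Measure.pi μ).restrict (eval i ⁻¹' S) ≤ Measure.pi ν := by
  let e := MeasurableEquiv.piFinSuccAbove α i
  have hrest : (fun j => μ (i.succAbove j)) = fun j => ν (i.succAbove j) :=
    funext fun j => hne _ (Fin.succAbove_ne i j)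
  have hpre : e.symm ⁻¹' (eval i ⁻¹' S) = S ×ˢ univ := by
    ext x; simp [e, MeasurableEquiv.piFinSuccAbove_symm_apply]
  rw [← (measurePreserving_piFinSuccAbove μ i).symm.map_eq,
    ← (measurePreserving_piFinSuccAbove ν i).symm.map_eq, e.symm.restrict_map,
    ← Measure.map_smul, hpre, ← Measure.restrict_prod_eq_prod_univ, ← Measure.prod_smul_left,
    hrest]
  exact Measure.map_mono (Measure.prod_mono h le_rfl) e.symm.measurable

theorem ProbabilityTheory.gaussianReal_Ioi_self (m : ℝ) {v : ℝ≥0} (hv : v ≠ 0) :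
    gaussianReal m v (Ioi m) = 2⁻¹ := by
  have := nullSingletonClass_gaussianReal (μ := m) hv
  have hrefl : (gaussianReal m v).map (2 * m - ·) = gaussianReal m v := by
    rw [gaussianReal_map_const_sub]; ring_nf
  have hsymm : gaussianReal m v (Iic m) = gaussianReal m v (Ioi m) := calc
    _ = (gaussianReal m v).map (2 * m - ·) (Iic m) := by rw [hrefl]
    _ = gaussianReal m v (Ici m) := by
      rw [Measure.map_apply (by fun_prop) measurableSet_Iic]
      congr 1; ext x
      simp only [mem_preimage, mem_Iic, mem_Ici]
      constructor <;> intro <;> linarith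
    _ = gaussianReal m v (Ioi m) := measure_congr Ioi_ae_eq_Ici.symm
  have htotal : gaussianReal m v (Iic m) + gaussianReal m v (Ioi m) = 1 := by
    rw [← compl_Iic, measure_add_measure_compl measurableSet_Iic, measure_univ]
  rw [hsymm, ← two_mul] at htotal
  exact ENNReal.eq_inv_of_mul_eq_one_left (by rw [mul_comm, htotal])

theorem exp_mul_gaussianPDFReal_le_gaussianPDFReal_sub (m : ℝ) (v : ℝ≥0) {Δ x : ℝ} (hΔ : 0 ≤ Δ)
    (hx : x ≤ m) :
    exp (-Δ ^ 2 / (2 * v)) * gaussianPDFReal m v x ≤ gaussianPDFReal (m - Δ) v x := by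
  rw [gaussianPDFReal, gaussianPDFReal, mul_left_comm, ← exp_add]
  gcongr
  rw [← add_div]
  gcongr ?_ / _
  nlinarith [mul_nonneg hΔ (sub_nonneg.2 hx)]

theorem smul_restrict_Iic_gaussianReal_le (m : ℝ) {v : ℝ≥0} (hv : v ≠ 0) {Δ : ℝ} (hΔ : 0 ≤ Δ) :
    ENNReal.ofReal (exp (-Δ ^ 2 / (2 * v))) • (gaussianReal m v).restrict (Iic m)
      ≤ gaussianReal (m - Δ) v := by
  rw [gaussianReal_of_var_ne_zero _ hv, gaussianReal_of_var_ne_zero _ hv,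
    restrict_withDensity measurableSet_Iic, ← withDensity_indicator measurableSet_Iic,
    ← withDensity_smul _ ((measurable_gaussianPDF m v).indicator measurableSet_Iic)]
  refine withDensity_mono (Filter.Eventually.of_forall fun x => ?_)
  by_cases hx : x ≤ m
  · simp only [Pi.smul_apply, indicator_of_mem (mem_Iic.2 hx), smul_eq_mul, gaussianPDF,
      ← ENNReal.ofReal_mul (exp_nonneg _)]
    exact ENNReal.ofReal_le_ofReal (exp_mul_gaussianPDFReal_le_gaussianPDFReal_sub m v hΔ hx)
  · simp [indicator_of_notMem (show x ∉ Iic m from hx)]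

theorem gaussPi_smul_restrict_le (n : ℕ) {σ : ℝ} (hσ : σ ≠ 0) (θ : Fin (n + 1) → ℝ)
    (i : Fin (n + 1)) {Δ : ℝ} (hΔ : 0 ≤ Δ) :
    ENNReal.ofReal (exp (-Δ ^ 2 / (2 * σ ^ 2))) •
        (gaussPi (n + 1) σ θ).restrict (eval i ⁻¹' Iic (θ i))
      ≤ gaussPi (n + 1) σ (update θ i (θ i - Δ)) := by
  have hv : (σ ^ 2).toNNReal ≠ 0 := by simpa using hσ
  refine Measure.smul_restrict_pi_le_pi (fun j hj => by simp [update_of_ne hj]) ?_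
  simpa [Real.coe_toNNReal _ (sq_nonneg σ)] using smul_restrict_Iic_gaussianReal_le (θ i) hv hΔ

theorem gaussPi_compl_Iic (d : ℕ) {σ : ℝ} (hσ : σ ≠ 0) (θ : Fin d → ℝ) (i : Fin d) :
    gaussPi d σ θ (eval i ⁻¹' Iic (θ i))ᶜ = 2⁻¹ := by
  have hv : (σ ^ 2).toNNReal ≠ 0 := by simpa using hσ
  rw [← preimage_compl, compl_Iic, gaussPi,
    (measurePreserving_eval _ i).measure_preimage measurableSet_Ioi.nullMeasurableSet]
  exact gaussianReal_Ioi_self _ hv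

theorem le_max_measureReal_of_smul_restrict_le {Ω : Type*} [MeasurableSpace Ω]
    {P₀ P₁ : Measure Ω} [IsProbabilityMeasure P₀] [IsFiniteMeasure P₁] {A₀ A₁ S : Set Ω}
    (hS : MeasurableSet S) (hcover : A₀ᶜ ∩ S ⊆ A₁) (hhalf : P₀ Sᶜ ≤ 2⁻¹) {c : ℝ}
    (hc₀ : 0 ≤ c) (hc₁ : c ≤ 1) (hcomp : ENNReal.ofReal c • P₀.restrict S ≤ P₁) :
    c / 4 ≤ max (P₀.real A₀) (P₁.real A₁) := by
  by_cases h₀ : 1 / 4 ≤ P₀.real A₀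
  · exact le_max_of_le_left (by linarith)
  refine le_max_of_le_right ?_
  have hunion : 1 ≤ P₀.real A₀ + P₀.real Sᶜ + P₀.real (A₀ᶜ ∩ S) := calc
    1 = P₀.real (A₀ ∪ Sᶜ ∪ (A₀ᶜ ∩ S)) := by
      rw [← probReal_univ (μ := P₀)]; congr 1; ext x
      by_cases x ∈ A₀ <;> by_cases x ∈ S <;> simp_all
    _ ≤ _ := (measureReal_union_le _ _).trans (add_le_add_left (measureReal_union_le _ _) _)
  have hhalf' : P₀.real Sᶜ ≤ 1 / 2 := by
    simpa [measureReal_def] using ENNReal.toReal_mono (by simp) hhalf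
  have hmass : c * P₀.real (A₀ᶜ ∩ S) ≤ P₁.real A₁ := by
    have h := Measure.le_iff'.1 hcomp (A₀ᶜ ∩ S)
    rw [Measure.smul_apply, Measure.restrict_apply' hS, inter_assoc, inter_self, smul_eq_mul] at h
    calc c * P₀.real (A₀ᶜ ∩ S) = (ENNReal.ofReal c * P₀ (A₀ᶜ ∩ S)).toReal := by
          rw [ENNReal.toReal_mul, ENNReal.toReal_ofReal hc₀, measureReal_def]
      _ ≤ P₁.real (A₀ᶜ ∩ S) := ENNReal.toReal_mono (measure_ne_top _ _) h
      _ ≤ P₁.real A₁ := measureReal_mono hcover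
  nlinarith

theorem le_abs_sub_of_abs_sub_lt {x s t c : ℝ} (hst : 2 * c ≤ |s - t|) (hx : |x - s| < c) :
    c ≤ |x - t| := by
  linarith [abs_sub_le s x t, abs_sub_comm x s]

theorem sum_sq_single {d : ℕ} (i : Fin d) (a : ℝ) :
    ∑ j, (Pi.single i a : Fin d → ℝ) j ^ 2 = a ^ 2 := by
  simp [Pi.single_apply, ite_pow]

theorem single_mem_B2_inter_B0 {d : ℕ} (i : Fin d) {a κ : ℝ} (ha : a ^ 2 ≤ κ ^ 2) :
    Pi.single i a ∈ B2 d κ ∩ B0 d 1 := by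
  refine ⟨by simpa [B2, sum_sq_single] using ha, ?_⟩
  have hsupp : ∀ j, (Pi.single i a : Fin d → ℝ) j ≠ 0 → j = i :=
    fun j hj => by_contra fun h => hj (by simp [h])
  exact Finite.card_le_one_iff_subsingleton.2
    ⟨fun ⟨j, hj⟩ ⟨k, hk⟩ => Subtype.ext ((hsupp j hj).trans (hsupp k hk).symm)⟩

theorem quadratic_functional_prob_lower_one_sparse_general
    (b : ℝ) (hb : 0 < b) (d : ℕ) (hd : 1 ≤ d) (κ σ : ℝ) (hσ : 0 < σ)
    (hbσκ : b * σ < κ) :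
    ∀ T : (Fin d → ℝ) → ℝ, Measurable T →
      ENNReal.ofReal ((1 / 4) * Real.exp (-b ^ 2 / 4))
        ≤ ⨆ θ ∈ B2 d κ ∩ B0 d 1,
            gaussPi d σ θ {y | (3 * b / 8) * σ * κ ≤ |T y - ∑ j, (θ j) ^ 2|} := by
  intro T _
  obtain ⟨n, rfl⟩ : ∃ n, d = n + 1 := ⟨d - 1, by omega⟩
  set c := 3 * b / 8 * σ * κ
  set Δ := b * σ / 2
  set θ₀ : Fin (n + 1) → ℝ := Pi.single 0 κ
  have hθ₁ : update θ₀ 0 (θ₀ 0 - Δ) = Pi.single 0 (κ - Δ) := by simp [θ₀, Pi.single]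
  have hΔ : 0 ≤ Δ := by positivity
  have hΔκ : Δ < κ := by simp only [Δ]; nlinarith [mul_pos hb hσ]
  have hsep : 2 * c ≤ |κ ^ 2 - (κ - Δ) ^ 2| := by
    have hgap : κ ^ 2 - (κ - Δ) ^ 2 - 2 * c = b * σ * (κ - b * σ) / 4 := by
      simp only [c, Δ]; ring
    exact le_abs.2 (Or.inl (by nlinarith [hgap, mul_pos (mul_pos hb hσ) (sub_pos.2 hbσκ)]))
  have hrate : -Δ ^ 2 / (2 * σ ^ 2) = -b ^ 2 / 8 := by simp only [Δ]; field_simp; ring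
  have hexp : 1 / 4 * exp (-b ^ 2 / 4) ≤ exp (-b ^ 2 / 8) / 4 := by
    linarith [exp_le_exp.2 (show -b ^ 2 / 4 ≤ -b ^ 2 / 8 by nlinarith)]
  have key := le_max_measureReal_of_smul_restrict_le (A₀ := {y | c ≤ |T y - κ ^ 2|})
    (A₁ := {y | c ≤ |T y - (κ - Δ) ^ 2|}) (measurableSet_Iic.preimage (measurable_pi_apply 0))
    (fun y hy => le_abs_sub_of_abs_sub_lt hsep (not_le.1 hy.1))
    (gaussPi_compl_Iic _ hσ.ne' θ₀ 0).le (exp_nonneg _) (exp_le_one_iff.2 (by nlinarith))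
    (hrate ▸ gaussPi_smul_restrict_le n hσ.ne' θ₀ 0 hΔ)
  rw [hθ₁] at key
  rcases le_max_iff.1 (hexp.trans key) with h | h
  · refine le_iSup₂_of_le θ₀ (single_mem_B2_inter_B0 0 le_rfl) ?_
    rw [sum_sq_single]; exact ENNReal.ofReal_le_of_le_toReal h
  · refine le_iSup₂_of_le (Pi.single 0 (κ - Δ))
      (single_mem_B2_inter_B0 0 (sq_le_sq' (by linarith) (by linarith))) ?_
    rw [sum_sq_single]; exact ENNReal.ofReal_le_of_le_toReal h

/-- Proposition 7.3: if `κ > bσ` then every measurable estimator `T` of the quadratic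
functional satisfies
`sup_{θ ∈ B_2(κ) ∩ B_0(1)} P_θ(|T(y) − Q(θ)| ≥ (3b/8)σκ) ≥ (1/4) exp(−b²/4)`. -/
theorem quadratic_functional_prob_lower_one_sparse
    (b : ℝ) (hb : 0 < b) (d : ℕ) (hd : 1 ≤ d) (κ σ : ℝ) (hκ : 0 < κ) (hσ : 0 < σ)
    (hbσκ : b * σ < κ) :
    ∀ T : (Fin d → ℝ) → ℝ, Measurable T →
      ENNReal.ofReal ((1 / 4) * Real.exp (-b ^ 2 / 4))
        ≤ ⨆ θ ∈ B2 d κ ∩ B0 d 1,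
            gaussPi d σ θ {y | (3 * b / 8) * σ * κ ≤ |T y - ∑ j, (θ j) ^ 2|} :=
  quadratic_functional_prob_lower_one_sparse_general b hb d hd κ σ hσ hbσκ
end

section
/- Let b > 0 and let s, d be integers with 1 ≤ s ≤ d. If κ, σ > 0 satisfy κ⁴ ≤ b²σ⁴ s² log²(1+d/s²), then inf_{T̂} sup_{θ ∈ B_2(κ) ∩ B_0(s)} P_θ(|T̂(y) − Q(θ)| ≥ κ²/(2 max(b,1))) ≥ (1/4)·exp(1 − e), where the infimum is over all Borel measurable estimators T̂ : ℝ^d → ℝ. -/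
open MeasureTheory ProbabilityTheory Real
open scoped ENNReal NNReal BigOperators

/-!
Le Cam's method with a mixture alternative. Let `a² = min(σ² log(1 + d/s²), κ²/s)` and, for
each `s`-subset `S`, let `θ_S = a 𝟙_S`; all these lie in `B_2(κ) ∩ B_0(s)` and share
`Q(θ_S) = s a² ≥ κ²/max(b,1)`. An estimator is `κ²/(2 max(b,1))`-accurate at `0` or at
`s a²`, never both, so twice the worst error probability is at least `∫ min(1, g) dP_0`,
where `g` is the likelihood ratio of the uniform mixture of the `P_{θ_S}` against `P_0`.
Gaussian likelihood ratios satisfy `E_0[L_S L_{S'}] = exp(a² |S ∩ S'| / σ²)`, and averaging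
`(1 + d/s²)^{|S ∩ S'|}` over `S'` gives `∫ g² ≤ e`. Finally `min(1, x) ≥ c x - c² x² / 4`
with `c = 1/e` yields `∫ min(1, g) dP_0 ≥ 3/(4e) ≥ (1/2) exp(1 - e)`.
-/

open Finset

section ProductDensity

variable {ι : Type*} [Fintype ι] {α : ι → Type*} [∀ i, MeasurableSpace (α i)]
  {μ : ∀ i, Measure (α i)} [∀ i, IsProbabilityMeasure (μ i)]

lemma lintegral_pi_prod {f : ∀ i, α i → ℝ≥0∞} (hf : ∀ i, Measurable (f i)) :
    ∫⁻ x, ∏ i, f i (x i) ∂Measure.pi μ = ∏ i, ∫⁻ x, f i x ∂μ i := by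
  rw [lintegral_prod_eq_prod_lintegral_of_indepFun _ _
    (iIndepFun_pi fun i => (hf i).aemeasurable) fun i => (hf i).comp (measurable_pi_apply i)]
  exact prod_congr rfl fun i _ => (measurePreserving_eval μ i).lintegral_comp (hf i)

lemma pi_withDensity {f : ∀ i, α i → ℝ≥0∞} (hf : ∀ i, Measurable (f i))
    (hf_ne_top : ∀ i x, f i x ≠ ⊤) :
    Measure.pi (fun i => (μ i).withDensity (f i))
      = (Measure.pi μ).withDensity (fun x => ∏ i, f i (x i)) := by
  have := fun i => SigmaFinite.withDensity_of_ne_top' (μ := μ i) (hf_ne_top i)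
  refine Measure.pi_eq fun A hA => ?_
  have hind : (Set.univ.pi A).indicator (fun x => ∏ i, f i (x i))
      = fun x => ∏ i, (A i).indicator (f i) (x i) := by
    funext x
    classical
    simp only [Set.indicator_apply, Set.mem_pi, Set.mem_univ, mem_univ, true_imp_iff,
      prod_ite_zero]
  rw [withDensity_apply _ (MeasurableSet.univ_pi hA),
    ← lintegral_indicator (MeasurableSet.univ_pi hA), hind,
    lintegral_pi_prod fun i => (hf i).indicator (hA i)]
  exact prod_congr rfl fun i _ => by
    rw [lintegral_indicator (hA i), withDensity_apply _ (hA i)]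

end ProductDensity

section Mixture

variable {α : Type*} [MeasurableSpace α] {μ : Measure α}

lemma ENNReal.ofReal_mul_le_min_one_add {c : ℝ} (hc0 : 0 ≤ c) (hc1 : c ≤ 1) (x : ℝ≥0∞) :
    ENNReal.ofReal c * x ≤ min 1 x + ENNReal.ofReal (c ^ 2 / 4) * x ^ 2 := by
  rcases eq_or_lt_of_le hc0 with rfl | hc
  · simp
  rcases eq_or_ne x ⊤ with rfl | hx
  · simp [ENNReal.top_pow, ENNReal.mul_top, hc]
  have ht : 0 ≤ x.toReal := ENNReal.toReal_nonneg
  rw [← ENNReal.ofReal_toReal hx, ← ENNReal.ofReal_one, ← ENNReal.ofReal_min,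
    ← ENNReal.ofReal_pow ht, ← ENNReal.ofReal_mul hc0, ← ENNReal.ofReal_mul (by positivity),
    ← ENNReal.ofReal_add (by positivity) (by positivity)]
  refine ENNReal.ofReal_le_ofReal ?_
  rcases le_total x.toReal 1 with h | h
  · rw [min_eq_right h]
    nlinarith [mul_le_of_le_one_left ht hc1]
  · rw [min_eq_left h]
    nlinarith [sq_nonneg (c * x.toReal - 2)]

lemma ofReal_le_lintegral_min_one {g : α → ℝ≥0∞} (hg : Measurable g) (h1 : ∫⁻ x, g x ∂μ = 1)
    {M : ℝ} (hM : 1 ≤ M) (h2 : ∫⁻ x, g x ^ 2 ∂μ ≤ ENNReal.ofReal M) :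
    ENNReal.ofReal (3 / (4 * M)) ≤ ∫⁻ x, min 1 (g x) ∂μ := by
  have hM0 : 0 < M := by linarith
  have key : ENNReal.ofReal M⁻¹ ≤ ∫⁻ x, min 1 (g x) ∂μ + ENNReal.ofReal (M⁻¹ / 4) := calc
    ENNReal.ofReal M⁻¹ = ∫⁻ x, ENNReal.ofReal M⁻¹ * g x ∂μ := by
      rw [lintegral_const_mul _ hg, h1, mul_one]
    _ ≤ ∫⁻ x, min 1 (g x) + ENNReal.ofReal (M⁻¹ ^ 2 / 4) * g x ^ 2 ∂μ :=
      lintegral_mono fun x =>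
        ENNReal.ofReal_mul_le_min_one_add (by positivity) (inv_le_one_of_one_le₀ hM) (g x)
    _ = ∫⁻ x, min 1 (g x) ∂μ + ENNReal.ofReal (M⁻¹ ^ 2 / 4) * ∫⁻ x, g x ^ 2 ∂μ := by
      rw [lintegral_add_right _ (by fun_prop), lintegral_const_mul _ (by fun_prop)]
    _ ≤ ∫⁻ x, min 1 (g x) ∂μ + ENNReal.ofReal (M⁻¹ ^ 2 / 4) * ENNReal.ofReal M := by
      gcongr
    _ = ∫⁻ x, min 1 (g x) ∂μ + ENNReal.ofReal (M⁻¹ / 4) := by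
      rw [← ENNReal.ofReal_mul (by positivity)]
      congr 2
      field_simp
  have h34 : 3 / (4 * M) = M⁻¹ - M⁻¹ / 4 := by field_simp; ring
  rw [h34, ENNReal.ofReal_sub _ (by positivity)]
  exact tsub_le_iff_right.mpr key

lemma ofReal_le_two_mul_of_mixture {ι : Type*} {F : Finset ι} (hF : F.Nonempty)
    {f : ι → α → ℝ≥0∞} (hf : ∀ i, Measurable (f i)) (hf1 : ∀ i ∈ F, ∫⁻ x, f i x ∂μ = 1)
    {M : ℝ} (hM : 1 ≤ M)
    (hf2 : ∀ i ∈ F, ∑ j ∈ F, ∫⁻ x, f i x * f j x ∂μ ≤ #F * ENNReal.ofReal M)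
    {A B : Set α} (hB : MeasurableSet B) (hAB : A ∪ B = Set.univ) {R : ℝ≥0∞} (hAR : μ A ≤ R)
    (hBR : ∀ i ∈ F, μ.withDensity (f i) B ≤ R) :
    ENNReal.ofReal (3 / (4 * M)) ≤ 2 * R := by
  set n : ℝ≥0∞ := (#F : ℝ≥0∞)
  have hn0 : n ≠ 0 := by simpa [n] using hF.ne_empty
  have hn : n⁻¹ * n = 1 := ENNReal.inv_mul_cancel hn0 (ENNReal.natCast_ne_top _)
  set g : α → ℝ≥0∞ := fun x => n⁻¹ * ∑ i ∈ F, f i x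
  have hg : Measurable g := by fun_prop
  have hg1 : ∫⁻ x, g x ∂μ = 1 := by
    rw [lintegral_const_mul _ (by fun_prop), lintegral_finsetSum _ fun i _ => hf i,
      sum_congr rfl hf1, sum_const, nsmul_one, hn]
  have hg2 : ∫⁻ x, g x ^ 2 ∂μ ≤ ENNReal.ofReal M := calc
    ∫⁻ x, g x ^ 2 ∂μ = ∫⁻ x, n⁻¹ * (n⁻¹ * ∑ i ∈ F, ∑ j ∈ F, f i x * f j x) ∂μ := by
      simp_rw [g, ← sum_mul_sum]
      ring_nf
    _ = n⁻¹ * (n⁻¹ * ∑ i ∈ F, ∑ j ∈ F, ∫⁻ x, f i x * f j x ∂μ) := by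
      rw [lintegral_const_mul _ (by fun_prop), lintegral_const_mul _ (by fun_prop),
        lintegral_finsetSum _ fun i _ => by fun_prop]
      exact congrArg _ <| congrArg _ <| sum_congr rfl fun i _ =>
        lintegral_finsetSum _ fun j _ => (hf i).mul (hf j)
    _ ≤ n⁻¹ * (n⁻¹ * ∑ _i ∈ F, n * ENNReal.ofReal M) := by gcongr with i hi; exact hf2 i hi
    _ = (n⁻¹ * n) * (n⁻¹ * n) * ENNReal.ofReal M := by
      rw [sum_const, nsmul_eq_mul]
      ring
    _ = ENNReal.ofReal M := by rw [hn, one_mul, one_mul]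
  calc ENNReal.ofReal (3 / (4 * M)) ≤ ∫⁻ x, min 1 (g x) ∂μ :=
        ofReal_le_lintegral_min_one hg hg1 hM hg2
    _ = ∫⁻ x in A ∪ B, min 1 (g x) ∂μ := by rw [hAB, Measure.restrict_univ]
    _ ≤ ∫⁻ x in A, min 1 (g x) ∂μ + ∫⁻ x in B, min 1 (g x) ∂μ := lintegral_union_le _ _ _
    _ ≤ ∫⁻ x in A, 1 ∂μ + ∫⁻ x in B, g x ∂μ := by
        gcongr with x x <;> simp
    _ = μ A + n⁻¹ * ∑ i ∈ F, μ.withDensity (f i) B := by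
        rw [setLIntegral_one, lintegral_const_mul _ (by fun_prop),
          lintegral_finsetSum _ fun i _ => hf i]
        simp_rw [withDensity_apply _ hB]
    _ ≤ R + n⁻¹ * (#F • R) := by gcongr; exact sum_le_card_nsmul _ _ _ hBR
    _ = 2 * R := by
        rw [nsmul_eq_mul, ← mul_assoc, hn, one_mul, two_mul]

end Mixture

section SubsetCounting

lemma choose_sub_le_choose_mul_pow {n s k : ℕ} (hsn : s ≤ n) (hks : k ≤ s) :
    ((n - k).choose (s - k) : ℝ) ≤ n.choose s * ((s : ℝ) / n) ^ k := by
  induction k with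
  | zero => simp
  | succ k ih =>
    obtain ⟨m, hm⟩ : ∃ m, n - k = m + 1 := ⟨n - (k + 1), by omega⟩
    obtain ⟨r, hr⟩ : ∃ r, s - k = r + 1 := ⟨s - (k + 1), by omega⟩
    have ih' := ih (by omega)
    rw [hm, hr] at ih'
    rw [show n - (k + 1) = m by omega, show s - (k + 1) = r by omega]
    have hm' : (m : ℝ) + 1 = n - k := by rw [← Nat.cast_sub (by omega), hm, Nat.cast_succ]
    have hr' : (r : ℝ) + 1 = s - k := by rw [← Nat.cast_sub (by omega), hr, Nat.cast_succ]
    have hratio : ((r : ℝ) + 1) / (m + 1) ≤ s / n := by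
      rw [div_le_div_iff₀ (by positivity) (Nat.cast_pos.mpr (by omega)), hm', hr']
      nlinarith [mul_le_mul_of_nonneg_left (Nat.cast_le.mpr hsn : (s : ℝ) ≤ n) k.cast_nonneg]
    calc (m.choose r : ℝ) = (m + 1).choose (r + 1) * ((r + 1) / (m + 1)) := by
          rw [mul_div_assoc', eq_div_iff (by positivity), mul_comm]
          exact_mod_cast Nat.add_one_mul_choose_eq m r
      _ ≤ n.choose s * ((s : ℝ) / n) ^ k * (s / n) :=
          mul_le_mul ih' hratio (by positivity) (by positivity)
      _ = n.choose s * ((s : ℝ) / n) ^ (k + 1) := by ring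

variable {α : Type*} [Fintype α] [DecidableEq α]

lemma sum_powersetCard_one_add_pow_card_inter_le {s : ℕ} (hs : s ≤ Fintype.card α) {u : ℝ}
    (hu : 0 ≤ u) {S : Finset α} (hS : #S = s) :
    ∑ S' ∈ powersetCard s univ, (1 + u) ^ #(S' ∩ S)
      ≤ (Fintype.card α).choose s * (1 + u * s / Fintype.card α) ^ s := by
  set n := Fintype.card α
  have hexpand : ∀ S' : Finset α, (1 + u) ^ #(S' ∩ S) = ∑ T ∈ (S' ∩ S).powerset, u ^ #T := by
    intro S'
    simpa using prod_one_add (f := fun _ => u) (S' ∩ S)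
  -- Expand `(1 + u) ^ #(S' ∩ S)` over the `T ⊆ S' ∩ S`, then count the `S'` containing each `T`.
  calc ∑ S' ∈ powersetCard s univ, (1 + u) ^ #(S' ∩ S)
      = ∑ T ∈ S.powerset, ∑ S' ∈ {S' ∈ powersetCard s univ | T ⊆ S'}, u ^ #T := by
        simp_rw [hexpand]
        refine sum_comm' fun S' T => ?_
        simp only [mem_powerset, mem_filter, subset_inter_iff]
        tauto
    _ = ∑ T ∈ S.powerset, ((n - #T).choose (s - #T) : ℝ) * u ^ #T := by
        refine sum_congr rfl fun T hT => ?_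
        rw [sum_const, nsmul_eq_mul, card_filter_powersetCard_subset _ _ _ (subset_univ T)
          (hS ▸ card_le_card (mem_powerset.mp hT)), card_univ]
    _ ≤ ∑ T ∈ S.powerset, (n.choose s * ((s : ℝ) / n) ^ #T) * u ^ #T := by
        gcongr with T hT
        exact choose_sub_le_choose_mul_pow hs (hS ▸ card_le_card (mem_powerset.mp hT))
    _ = n.choose s * (1 + u * s / n) ^ s := by
        rw [← hS, add_comm, ← sum_pow_mul_eq_add_pow, mul_sum]
        refine sum_congr rfl fun T _ => ?_
        rw [one_pow, mul_one, mul_assoc, ← mul_pow]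
        ring

lemma sum_powersetCard_one_add_pow_card_inter_le_exp {s : ℕ} (hs : s ≤ Fintype.card α) {u : ℝ}
    (hu : 0 ≤ u) {S : Finset α} (hS : #S = s) :
    ∑ S' ∈ powersetCard s univ, (1 + u) ^ #(S' ∩ S)
      ≤ (Fintype.card α).choose s * exp (u * s ^ 2 / Fintype.card α) := by
  refine (sum_powersetCard_one_add_pow_card_inter_le hs hu hS).trans ?_
  gcongr
  calc (1 + u * s / Fintype.card α) ^ s ≤ exp (u * s / Fintype.card α) ^ s := by
        gcongr
        linarith [add_one_le_exp (u * s / Fintype.card α)]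
    _ = exp (u * s ^ 2 / Fintype.card α) := by
        rw [← exp_nat_mul]
        ring_nf

end SubsetCounting

section GaussianLikelihoodRatio

variable {v : ℝ≥0}

noncomputable def gaussianRatio (v : ℝ≥0) (m x : ℝ) : ℝ≥0∞ :=
  ENNReal.ofReal (exp ((m * x - m ^ 2 / 2) / v))

@[fun_prop]
lemma measurable_gaussianRatio (v : ℝ≥0) (m : ℝ) : Measurable (gaussianRatio v m) := by
  unfold gaussianRatio; fun_prop

lemma gaussianPDFReal_eq_mul_exp (hv : v ≠ 0) (m x : ℝ) :
    gaussianPDFReal m v x = gaussianPDFReal 0 v x * exp ((m * x - m ^ 2 / 2) / v) := by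
  have hv' : (v : ℝ) ≠ 0 := NNReal.coe_ne_zero.mpr hv
  simp only [gaussianPDFReal, mul_assoc, ← Real.exp_add]
  congr 2
  field_simp
  ring

lemma gaussianReal_eq_withDensity_gaussianRatio (hv : v ≠ 0) (m : ℝ) :
    gaussianReal m v = (gaussianReal 0 v).withDensity (gaussianRatio v m) := by
  rw [gaussianReal_of_var_ne_zero 0 hv, gaussianReal_of_var_ne_zero m hv,
    ← withDensity_mul _ (measurable_gaussianPDF _ _) (measurable_gaussianRatio v m)]
  congr 1
  funext x
  rw [Pi.mul_apply, gaussianPDF, gaussianPDF, gaussianRatio, gaussianPDFReal_eq_mul_exp hv,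
    ENNReal.ofReal_mul (gaussianPDFReal_nonneg _ _ _)]

lemma lintegral_exp_mul_gaussianReal (μ t : ℝ) :
    ∫⁻ x, ENNReal.ofReal (exp (t * x)) ∂gaussianReal μ v
      = ENNReal.ofReal (exp (μ * t + v * t ^ 2 / 2)) := by
  rw [← ofReal_integral_eq_lintegral_ofReal (integrable_exp_mul_gaussianReal t)
    (ae_of_all _ fun _ => (exp_pos _).le),
    ← mgf_gaussianReal (p := gaussianReal μ v) (X := id) Measure.map_id]
  rfl

lemma lintegral_gaussianRatio_mul (hv : v ≠ 0) (m m' : ℝ) :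
    ∫⁻ x, gaussianRatio v m x * gaussianRatio v m' x ∂gaussianReal 0 v
      = ENNReal.ofReal (exp (m * m' / v)) := by
  have hv' : (v : ℝ) ≠ 0 := NNReal.coe_ne_zero.mpr hv
  have hsplit : ∀ x, gaussianRatio v m x * gaussianRatio v m' x
      = ENNReal.ofReal (exp (-(m ^ 2 + m' ^ 2) / (2 * v)))
        * ENNReal.ofReal (exp ((m + m') / v * x)) := by
    intro x
    simp only [gaussianRatio, ← ENNReal.ofReal_mul (exp_pos _).le, ← Real.exp_add]
    congr 2
    field_simp
    ring
  simp_rw [hsplit]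
  rw [lintegral_const_mul _ (by fun_prop), lintegral_exp_mul_gaussianReal,
    ← ENNReal.ofReal_mul (exp_pos _).le, ← Real.exp_add]
  congr 2
  field_simp
  ring

end GaussianLikelihoodRatio

section GaussPi

variable {d : ℕ} {σ : ℝ}

noncomputable def gaussPiRatio (d : ℕ) (σ : ℝ) (θ y : Fin d → ℝ) : ℝ≥0∞ :=
  ∏ j, gaussianRatio (σ ^ 2).toNNReal (θ j) (y j)

@[fun_prop]
lemma measurable_gaussPiRatio (θ : Fin d → ℝ) : Measurable (gaussPiRatio d σ θ) := by
  unfold gaussPiRatio; fun_prop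

lemma toNNReal_sq_ne_zero (hσ : σ ≠ 0) : (σ ^ 2).toNNReal ≠ 0 := by
  simpa using hσ

instance (θ : Fin d → ℝ) : IsProbabilityMeasure (gaussPi d σ θ) := by
  unfold gaussPi; infer_instance

lemma gaussPi_eq_withDensity (hσ : σ ≠ 0) (θ : Fin d → ℝ) :
    gaussPi d σ θ = (gaussPi d σ 0).withDensity (gaussPiRatio d σ θ) := by
  simp only [gaussPi, gaussianReal_eq_withDensity_gaussianRatio (toNNReal_sq_ne_zero hσ) (θ _)]
  exact pi_withDensity (fun j => measurable_gaussianRatio _ _) fun _ _ => ENNReal.ofReal_ne_top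

lemma lintegral_gaussPiRatio (hσ : σ ≠ 0) (θ : Fin d → ℝ) :
    ∫⁻ y, gaussPiRatio d σ θ y ∂gaussPi d σ 0 = 1 := by
  rw [← setLIntegral_univ, ← withDensity_apply _ MeasurableSet.univ,
    ← gaussPi_eq_withDensity hσ, measure_univ]

lemma lintegral_gaussPiRatio_mul (hσ : σ ≠ 0) (θ η : Fin d → ℝ) :
    ∫⁻ y, gaussPiRatio d σ θ y * gaussPiRatio d σ η y ∂gaussPi d σ 0
      = ENNReal.ofReal (exp ((∑ j, θ j * η j) / σ ^ 2)) := by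
  simp only [gaussPiRatio, ← prod_mul_distrib]
  rw [gaussPi, lintegral_pi_prod (f := fun j x =>
    gaussianRatio _ (θ j) x * gaussianRatio _ (η j) x) fun j => by fun_prop]
  simp only [Pi.zero_apply, lintegral_gaussianRatio_mul (toNNReal_sq_ne_zero hσ),
    Real.coe_toNNReal _ (sq_nonneg σ)]
  rw [← ENNReal.ofReal_prod_of_nonneg fun _ _ => (exp_pos _).le, ← Real.exp_sum, sum_div]

end GaussPi

section SparsePrior

variable {d : ℕ}

def sparseVec (a : ℝ) (S : Finset (Fin d)) : Fin d → ℝ := fun j => if j ∈ S then a else 0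

lemma sum_sparseVec_mul (a : ℝ) (S S' : Finset (Fin d)) :
    ∑ j, sparseVec a S j * sparseVec a S' j = #(S ∩ S') * a ^ 2 := by
  have h : ∀ j, sparseVec a S j * sparseVec a S' j = if j ∈ S ∩ S' then a ^ 2 else 0 := by
    intro j
    by_cases hj : j ∈ S <;> by_cases hj' : j ∈ S' <;> simp [sparseVec, hj, hj', sq]
  simp_rw [h, sum_ite_mem, univ_inter, sum_const, nsmul_eq_mul]

lemma sum_sparseVec_sq (a : ℝ) (S : Finset (Fin d)) :
    ∑ j, sparseVec a S j ^ 2 = #S * a ^ 2 := by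
  simpa [← sq] using sum_sparseVec_mul a S S

lemma sparseVec_mem_B0 (a : ℝ) (S : Finset (Fin d)) : sparseVec a S ∈ B0 d #S := by
  have hsub : {j | sparseVec a S j ≠ 0} ⊆ (S : Set (Fin d)) := by
    intro j hj
    by_contra h
    exact hj (if_neg h)
  exact (Nat.card_mono (Set.toFinite _) hsub).trans_eq (by simp)

lemma zero_mem_B2 (κ : ℝ) : (0 : Fin d → ℝ) ∈ B2 d κ := by
  simp [B2, sq_nonneg]

lemma zero_mem_B0 (s : ℕ) : (0 : Fin d → ℝ) ∈ B0 d s := by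
  simp [B0]

lemma sparseVec_mem_B2 {a κ : ℝ} {S : Finset (Fin d)} (h : #S * a ^ 2 ≤ κ ^ 2) :
    sparseVec a S ∈ B2 d κ := by
  simpa [B2, sum_sparseVec_sq] using h

lemma sum_lintegral_gaussPiRatio_sparseVec_mul_le {σ a : ℝ} {s : ℕ} (hσ : σ ≠ 0) (hsd : s ≤ d)
    (ha : a ^ 2 ≤ σ ^ 2 * log (1 + d / s ^ 2)) {S : Finset (Fin d)} (hS : #S = s) :
    ∑ S' ∈ powersetCard s univ, ∫⁻ y, gaussPiRatio d σ (sparseVec a S) y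
        * gaussPiRatio d σ (sparseVec a S') y ∂gaussPi d σ 0
      ≤ #(powersetCard s (univ : Finset (Fin d))) * ENNReal.ofReal (exp 1) := by
  set u : ℝ := d / s ^ 2
  have hexp : exp (a ^ 2 / σ ^ 2) ≤ 1 + u := by
    rw [← exp_log (by positivity : 0 < 1 + u)]
    exact exp_le_exp.mpr (by rw [div_le_iff₀ (by positivity)]; linarith)
  have hu : u * s ^ 2 / d ≤ 1 := by
    refine div_le_one_of_le₀ ?_ d.cast_nonneg
    rcases eq_or_ne s 0 with rfl | hs
    · simp
    rw [div_mul_cancel₀ _ (by positivity)]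
  calc ∑ S' ∈ powersetCard s univ, ∫⁻ y, gaussPiRatio d σ (sparseVec a S) y
        * gaussPiRatio d σ (sparseVec a S') y ∂gaussPi d σ 0
      = ∑ S' ∈ powersetCard s univ, ENNReal.ofReal (exp (a ^ 2 / σ ^ 2) ^ #(S' ∩ S)) := by
        refine sum_congr rfl fun S' _ => ?_
        rw [lintegral_gaussPiRatio_mul hσ, sum_sparseVec_mul, ← exp_nat_mul, inter_comm]
        ring_nf
    _ ≤ ∑ S' ∈ powersetCard s univ, ENNReal.ofReal ((1 + u) ^ #(S' ∩ S)) := by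
        gcongr
    _ = ENNReal.ofReal (∑ S' ∈ powersetCard s univ, (1 + u) ^ #(S' ∩ S)) :=
        (ENNReal.ofReal_sum_of_nonneg fun _ _ => by positivity).symm
    _ ≤ ENNReal.ofReal (d.choose s * exp (u * s ^ 2 / d)) := by
        gcongr
        simpa using sum_powersetCard_one_add_pow_card_inter_le_exp (by simpa using hsd)
          (by positivity : 0 ≤ u) hS
    _ ≤ #(powersetCard s (univ : Finset (Fin d))) * ENNReal.ofReal (exp 1) := by
        rw [card_powersetCard, card_univ, Fintype.card_fin, ENNReal.ofReal_mul (by positivity),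
          ENNReal.ofReal_natCast]
        gcongr

end SparsePrior

lemma exists_sq_le_mul_and_between {b s κ V L : ℝ} (hb : 0 < b) (hs : 0 < s) (hV : 0 ≤ V)
    (hL : 0 ≤ L) (h : κ ^ 4 ≤ b ^ 2 * V ^ 2 * s ^ 2 * L ^ 2) :
    ∃ a : ℝ, a ^ 2 ≤ V * L ∧ s * a ^ 2 ≤ κ ^ 2 ∧ κ ^ 2 / max b 1 ≤ s * a ^ 2 := by
  have hκ : κ ^ 2 ≤ b * (s * (V * L)) := by
    rw [← pow_le_pow_iff_left₀ (sq_nonneg κ) (by positivity) two_ne_zero]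
    linarith
  have hmax : κ ^ 2 / max b 1 ≤ κ ^ 2 / b := by gcongr; exact le_max_left b 1
  have hmax' : κ ^ 2 / max b 1 ≤ κ ^ 2 := div_le_self (sq_nonneg κ) (le_max_right b 1)
  refine ⟨√(min (V * L) (κ ^ 2 / s)), ?_⟩
  rw [sq_sqrt (le_min (by positivity) (by positivity)), mul_min_of_nonneg _ _ hs.le,
    mul_div_cancel₀ _ hs.ne']
  exact ⟨min_le_left _ _, min_le_right _ _, le_min (hmax.trans ((div_le_iff₀' hb).mpr hκ)) hmax'⟩

lemma setOf_le_abs_sub_union_eq_univ {β : Type*} (f : β → ℝ) {r q q' : ℝ}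
    (h : 2 * r ≤ |q - q'|) : {y | r ≤ |f y - q|} ∪ {y | r ≤ |f y - q'|} = Set.univ :=
  Set.eq_univ_of_forall fun y => by
    by_contra! hy
    simp only [Set.mem_union, Set.mem_ofPred_eq, not_or, not_le] at hy
    linarith [abs_sub_le q (f y) q', abs_sub_comm q (f y)]

lemma ofReal_quarter_mul_exp_one_sub_exp_le {R : ℝ≥0∞}
    (h : ENNReal.ofReal (3 / (4 * exp 1)) ≤ 2 * R) :
    ENNReal.ofReal (1 / 4 * exp (1 - exp 1)) ≤ R := by
  have hexp : exp (1 - exp 1) * exp 1 ≤ 1 := by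
    rw [← exp_add, exp_le_one_iff]
    linarith [add_one_le_exp (1 : ℝ)]
  rw [← ENNReal.mul_le_mul_iff_right two_ne_zero ENNReal.ofNat_ne_top]
  refine le_trans ?_ h
  rw [← ENNReal.ofReal_ofNat, ← ENNReal.ofReal_mul zero_le_two]
  refine ENNReal.ofReal_le_ofReal ?_
  rw [le_div_iff₀ (by positivity)]
  linarith

theorem quadratic_functional_prob_lower_sparse_general
    (b : ℝ) (hb : 0 < b) (s d : ℕ) (hs : 1 ≤ s) (hsd : s ≤ d)
    (κ σ : ℝ) (hσ : 0 < σ)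
    (hyp : κ ^ 4 ≤ b ^ 2 * σ ^ 4 * (s : ℝ) ^ 2 * (Real.log (1 + (d : ℝ) / (s : ℝ) ^ 2)) ^ 2) :
    ∀ T : (Fin d → ℝ) → ℝ, Measurable T →
      ENNReal.ofReal ((1 / 4) * Real.exp (1 - Real.exp 1))
        ≤ ⨆ θ ∈ B2 d κ ∩ B0 d s,
            gaussPi d σ θ {y | κ ^ 2 / (2 * max b 1) ≤ |T y - ∑ j, (θ j) ^ 2|} := by
  intro T hT
  obtain ⟨a, ha, haκ, hκa⟩ := exists_sq_le_mul_and_between (s := s) (κ := κ) (V := σ ^ 2)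
    (L := log (1 + d / s ^ 2)) hb (by exact_mod_cast hs) (sq_nonneg σ)
    (log_nonneg (le_add_of_nonneg_right (by positivity))) (by linear_combination hyp)
  let E (q : ℝ) : Set (Fin d → ℝ) := {y | κ ^ 2 / (2 * max b 1) ≤ |T y - q|}
  show _ ≤ ⨆ θ ∈ B2 d κ ∩ B0 d s, gaussPi d σ θ (E (∑ j, θ j ^ 2))
  have hR : ∀ θ ∈ B2 d κ ∩ B0 d s, gaussPi d σ θ (E (∑ j, θ j ^ 2))
      ≤ ⨆ θ ∈ B2 d κ ∩ B0 d s, gaussPi d σ θ (E (∑ j, θ j ^ 2)) :=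
    fun θ hθ => le_biSup (fun θ => gaussPi d σ θ (E (∑ j, θ j ^ 2))) hθ
  refine ofReal_quarter_mul_exp_one_sub_exp_le <| ofReal_le_two_mul_of_mixture
    (powersetCard_nonempty.mpr (by simpa using hsd)) (fun S => measurable_gaussPiRatio _)
    (fun S _ => lintegral_gaussPiRatio hσ.ne' (sparseVec a S)) (one_le_exp zero_le_one)
    (fun S hS => sum_lintegral_gaussPiRatio_sparseVec_mul_le hσ.ne' hsd ha
      (mem_powersetCard_univ.mp hS))
    (measurableSet_le measurable_const (hT.sub measurable_const).abs)
    (setOf_le_abs_sub_union_eq_univ T (r := κ ^ 2 / (2 * max b 1)) (q := 0) (q' := s * a ^ 2) ?_)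
    (by simpa [E] using hR 0 ⟨zero_mem_B2 κ, zero_mem_B0 s⟩) fun S hS => ?_
  · rw [zero_sub, abs_neg, abs_of_nonneg (by positivity)]
    convert hκa using 1
    field_simp
  · rw [mem_powersetCard_univ] at hS
    have hQ : ∑ j, sparseVec a S j ^ 2 = s * a ^ 2 := by rw [sum_sparseVec_sq, hS]
    rw [← gaussPi_eq_withDensity hσ.ne']
    exact hQ ▸ hR _ ⟨sparseVec_mem_B2 (hS ▸ haκ), hS ▸ sparseVec_mem_B0 a S⟩

/-- Proposition 7.4: if `κ⁴ ≤ b²σ⁴ s² log²(1+d/s²)` and `1 ≤ s ≤ d`, then every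
measurable estimator `T` of the quadratic functional satisfies
`sup_{θ ∈ B_2(κ) ∩ B_0(s)} P_θ(|T(y) − Q(θ)| ≥ κ²/(2 max(b,1))) ≥ (1/4) exp(1 − e)`. -/
theorem quadratic_functional_prob_lower_sparse
    (b : ℝ) (hb : 0 < b) (s d : ℕ) (hs : 1 ≤ s) (hsd : s ≤ d)
    (κ σ : ℝ) (hκ : 0 < κ) (hσ : 0 < σ)
    (hyp : κ ^ 4 ≤ b ^ 2 * σ ^ 4 * (s : ℝ) ^ 2 * (Real.log (1 + (d : ℝ) / (s : ℝ) ^ 2)) ^ 2) :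
    ∀ T : (Fin d → ℝ) → ℝ, Measurable T →
      ENNReal.ofReal ((1 / 4) * Real.exp (1 - Real.exp 1))
        ≤ ⨆ θ ∈ B2 d κ ∩ B0 d s,
            gaussPi d σ θ {y | κ ^ 2 / (2 * max b 1) ≤ |T y - ∑ j, (θ j) ^ 2|} :=
  quadratic_functional_prob_lower_sparse_general b hb s d hs hsd κ σ hσ hyp
end
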